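/- Let P be a join-semilattice such that for every x ∈ P the set {y ∈ P : x ≰ y} is a union of finitely many (possibly zero) ideals of P, and suppose Δ(J(P)), ordered by inclusion, is well-founded. Then there exists a well-founded poset Q such that P embeds into I_{<ω}(Q) as a join-subsemilattice. -/

import Mathlib

open Set

/-- The poset `Ω(ω*)`: pairs `(i,j)` of naturals with `i < j`,
ordered by `(i,j) ≤ (i',j')` iff `i' ≤ i ∧ j ≤ j'`. We only need the carrier and the join. -/
abbrev OmegaStar : Type := {p : ℕ × ℕ // p.1 < p.2}

/-- The join in `Ω(ω*)`: `(i,j) ⊔ (i',j') = (min i i', max j j')`. -/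
def omegaJoin (a b : OmegaStar) : OmegaStar :=
  ⟨(min a.1.1 b.1.1, max a.1.2 b.1.2),
    lt_of_le_of_lt (min_le_left _ _) (lt_of_lt_of_le a.2 (le_max_left _ _))⟩

/-- `Ω̲(ω*)`: `Ω(ω*)` with a new least element (`none`) adjoined. -/
abbrev OmegaStarBot : Type := Option OmegaStar

/-- The join in `Ω̲(ω*)`. -/
def omegaBotJoin : OmegaStarBot → OmegaStarBot → OmegaStarBot
  | none, b => b
  | a, none => a
  | some a, some b => some (omegaJoin a b)

/-- `I_{<ω}(Q)`: the finitely generated initial segments of `Q`,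
i.e. downward closures of finite subsets of `Q` (including `∅`). -/
def FinGenInit (Q : Type*) [Preorder Q] : Set (Set Q) :=
  {S | ∃ F : Finset Q, S = {x | ∃ y ∈ F, x ≤ y}}

/-- An ideal of a poset: a nonempty, up-directed, downward closed subset. -/
def IsIdeal {P : Type*} [Preorder P] (I : Set P) : Prop :=
  I.Nonempty ∧ (∀ x ∈ I, ∀ y ∈ I, ∃ z ∈ I, x ≤ z ∧ y ≤ z) ∧
    ∀ x y : P, x ≤ y → y ∈ I → x ∈ I

/-- A completely meet-irreducible ideal: an ideal `I` for which there is an ideal `J ⊋ I`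
contained in every ideal strictly containing `I`. -/
def CMIdeal {P : Type*} [Preorder P] (I : Set P) : Prop :=
  IsIdeal I ∧ ∃ J : Set P, IsIdeal J ∧ I ⊂ J ∧ ∀ K : Set P, IsIdeal K → I ⊂ K → J ⊆ K

/-- An ideal of a sub-poset `P` of `α`: a subset of `P`, nonempty, up-directed,
downward closed within `P`. -/
def IsIdealIn {α : Type*} [Preorder α] (P I : Set α) : Prop :=
  I ⊆ P ∧ I.Nonempty ∧ (∀ x ∈ I, ∀ y ∈ I, ∃ z ∈ I, x ≤ z ∧ y ≤ z) ∧
    ∀ x ∈ P, ∀ y ∈ I, x ≤ y → x ∈ I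

/-- A completely meet-irreducible ideal of the sub-poset `P`. -/
def CMIdealIn {α : Type*} [Preorder α] (P I : Set α) : Prop :=
  IsIdealIn P I ∧ ∃ J : Set α, IsIdealIn P J ∧ I ⊂ J ∧
    ∀ K : Set α, IsIdealIn P K → I ⊂ K → J ⊆ K

/-- `{x} ∨ J`, the ideal `{z : z ≤ x ⊔ y for some y ∈ J}`. -/
def JoinUp {P : Type*} [SemilatticeSup P] (x : P) (J : Set P) : Set P :=
  {z | ∃ y ∈ J, z ≤ x ⊔ y}

/-- A nonempty chain `𝓘` of ideals is separating if for every `I ∈ 𝓘` with `I ≠ ⋃𝓘` and every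
`x ∈ ⋃𝓘 \ I` there is `J ∈ 𝓘` with `I ⊄ {x} ∨ J`. -/
def Separating {P : Type*} [SemilatticeSup P] (𝓘 : Set (Set P)) : Prop :=
  ∀ I ∈ 𝓘, I ≠ ⋃₀ 𝓘 → ∀ x ∈ (⋃₀ 𝓘) \ I, ∃ J ∈ 𝓘, ¬ I ⊆ JoinUp x J

/-- An independent subset of a join-semilattice: no member is below the join of finitely many
of the others. -/
def IndepSet {P : Type*} [SemilatticeSup P] (X : Set P) : Prop :=
  ∀ x ∈ X, ∀ F : Finset P, ∀ hF : F.Nonempty, ↑F ⊆ X \ {x} → ¬ x ≤ F.sup' hF id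

/-- `ℱ^{<ω}`: unions of finite subfamilies of `ℱ` (including `∅`). -/
def finUnions {α : Type*} (ℱ : Set (Set α)) : Set (Set α) :=
  {S | ∃ G : Finset (Set α), ↑G ⊆ ℱ ∧ S = ⋃₀ ↑G}

/-- `ℱ^∪`: unions of arbitrary subfamilies of `ℱ`. -/
def arbUnions {α : Type*} (ℱ : Set (Set α)) : Set (Set α) :=
  {S | ∃ G ⊆ ℱ, S = ⋃₀ G}

universe u

/-!
Take `Q = Δ(J(P))` and send `x` to the set of completely meet-irreducible ideals omitting `x`.
Ideals are prime for joins, so this map turns `⊔` into `∪`. An ideal maximal among those omitting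
`x` is completely meet-irreducible, its cover being the ideal generated by it and `x`; by Zorn every
ideal omitting `x` lies in such a one, which separates the points of `P`. Finally an ideal omitting
`x` lies in `{y | x ≰ y}`, hence in one of the finitely many ideals covering that set, hence in a
maximal ideal omitting `x` chosen above that ideal: so finitely many elements of `Q` generate the
image of `x`.
-/

section Preorder

variable {P : Type*} [Preorder P]

lemma IsIdeal.isLowerSet {I : Set P} (hI : IsIdeal I) : IsLowerSet I :=
  fun _ _ hba ha => hI.2.2 _ _ hba ha

lemma isIdeal_Iic (y : P) : IsIdeal (Iic y) :=
  ⟨⟨y, le_rfl⟩, fun _ hu _ hv => ⟨y, le_rfl, hu, hv⟩, fun _ _ huv hv => huv.trans hv⟩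

lemma isIdeal_sUnion_of_isChain {c : Set (Set P)} (hc : ∀ I ∈ c, IsIdeal I)
    (hchain : IsChain (· ⊆ ·) c) (hne : c.Nonempty) : IsIdeal (⋃₀ c) := by
  obtain ⟨I₀, hI₀⟩ := hne
  refine ⟨(hc I₀ hI₀).1.mono (subset_sUnion_of_mem hI₀), ?_, ?_⟩
  · rintro a ⟨A, hA, haA⟩ b ⟨B, hB, hbB⟩
    have directed_in {C} (hC : C ∈ c) (ha : a ∈ C) (hb : b ∈ C) :
        ∃ z ∈ ⋃₀ c, a ≤ z ∧ b ≤ z := by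
      obtain ⟨z, hz, haz, hbz⟩ := (hc C hC).2.1 a ha b hb
      exact ⟨z, ⟨C, hC, hz⟩, haz, hbz⟩
    rcases hchain.total hA hB with hAB | hBA
    · exact directed_in hB (hAB haA) hbB
    · exact directed_in hA haA (hBA hbB)
  · rintro a b hab ⟨B, hB, hbB⟩
    exact ⟨B, hB, (hc B hB).2.2 a b hab hbB⟩

lemma IsIdeal.exists_maximal_not_mem {G : Set P} (hG : IsIdeal G) {x : P} (hx : x ∉ G) :
    ∃ M, G ⊆ M ∧ Maximal (fun K => IsIdeal K ∧ x ∉ K) M := by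
  refine zorn_subset_nonempty {K | IsIdeal K ∧ x ∉ K} ?_ G ⟨hG, hx⟩
  intro c hc hchain hne
  refine ⟨⋃₀ c, ⟨isIdeal_sUnion_of_isChain (fun I hI => (hc hI).1) hchain hne, ?_⟩,
    fun _ => subset_sUnion_of_mem⟩
  rintro ⟨B, hB, hxB⟩
  exact (hc hB).2 hxB

lemma IsIdeal.exists_subset_of_subset_sUnion {I : Set P} (hI : IsIdeal I)
    {𝓖 : Finset (Set P)} (h𝓖 : ∀ G ∈ 𝓖, IsLowerSet G) (hsub : I ⊆ ⋃₀ ↑𝓖) :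
    ∃ G ∈ 𝓖, I ⊆ G := by
  classical
  induction 𝓖 using Finset.induction with
  | empty =>
    obtain ⟨y, hy⟩ := hI.1
    simpa using hsub hy
  | @insert G 𝓖 _ ih =>
    simp only [Finset.mem_insert, forall_eq_or_imp, exists_eq_or_imp] at h𝓖 ⊢
    by_cases hrest : I ⊆ ⋃₀ ↑𝓖
    · exact Or.inr (ih h𝓖.2 hrest)
    refine Or.inl fun b hb => ?_
    obtain ⟨a, haI, ha⟩ := not_subset.1 hrest
    obtain ⟨z, hz, haz, hbz⟩ := hI.2.1 a haI b hb
    have hzG : z ∈ G ∪ ⋃₀ ↑𝓖 := by simpa using hsub hz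
    rcases hzG with hzG | ⟨G', hG', hzG'⟩
    · exact h𝓖.1 hbz hzG
    · exact absurd ⟨G', hG', h𝓖.2 G' hG' haz hzG'⟩ ha

end Preorder

section SemilatticeSup

variable {P : Type*} [SemilatticeSup P]

lemma IsIdeal.sup_mem_iff {I : Set P} (hI : IsIdeal I) {a b : P} :
    a ⊔ b ∈ I ↔ a ∈ I ∧ b ∈ I := by
  refine ⟨fun h => ⟨hI.2.2 a _ le_sup_left h, hI.2.2 b _ le_sup_right h⟩, ?_⟩
  rintro ⟨ha, hb⟩
  obtain ⟨z, hz, haz, hbz⟩ := hI.2.1 a ha b hb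
  exact hI.2.2 _ _ (sup_le haz hbz) hz

lemma IsIdeal.joinUp {M : Set P} (hM : IsIdeal M) (x : P) : IsIdeal (JoinUp x M) := by
  refine ⟨?_, ?_, fun a b hab ⟨y, hy, hb⟩ => ⟨y, hy, hab.trans hb⟩⟩
  · obtain ⟨y, hy⟩ := hM.1
    exact ⟨x, y, hy, le_sup_left⟩
  · rintro a ⟨y₁, hy₁, ha⟩ b ⟨y₂, hy₂, hb⟩
    obtain ⟨z, hz, h₁, h₂⟩ := hM.2.1 y₁ hy₁ y₂ hy₂
    exact ⟨x ⊔ z, ⟨z, hz, le_rfl⟩,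
      ha.trans (sup_le_sup_left h₁ x), hb.trans (sup_le_sup_left h₂ x)⟩

lemma Maximal.cmIdeal {M : Set P} {x : P} (hM : Maximal (fun K => IsIdeal K ∧ x ∉ K) M) :
    CMIdeal M := by
  obtain ⟨hMI, hxM⟩ := hM.prop
  have hx_mem : x ∈ JoinUp x M := by
    obtain ⟨y, hy⟩ := hMI.1
    exact ⟨y, hy, le_sup_left⟩
  refine ⟨hMI, JoinUp x M, hMI.joinUp x,
    ⟨fun m hm => ⟨m, hm, le_sup_right⟩, fun h => hxM (h hx_mem)⟩, ?_⟩
  intro K hK hMK z ⟨y, hy, hzle⟩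
  have hxK : x ∈ K := by
    by_contra hxK
    exact hMK.2 (hM.eq_of_subset ⟨hK, hxK⟩ hMK.1).ge
  obtain ⟨w, hw, hxw, hyw⟩ := hK.2.1 x hxK y (hMK.1 hy)
  exact hK.2.2 z w (hzle.trans (sup_le hxw hyw)) hw

lemma IsIdeal.exists_cmIdeal_not_mem {G : Set P} (hG : IsIdeal G) {x : P} (hx : x ∉ G) :
    ∃ M, CMIdeal M ∧ G ⊆ M ∧ x ∉ M := by
  obtain ⟨M, hGM, hM⟩ := hG.exists_maximal_not_mem hx
  exact ⟨M, hM.cmIdeal, hGM, hM.prop.2⟩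

lemma not_le_iff_exists_cmIdeal {x y : P} : ¬ x ≤ y ↔ ∃ M, CMIdeal M ∧ y ∈ M ∧ x ∉ M := by
  refine ⟨fun hxy => ?_, fun ⟨M, hM, hyM, hxM⟩ hxy => hxM (hM.1.2.2 x y hxy hyM)⟩
  obtain ⟨M, hM, hyM, hxM⟩ := (isIdeal_Iic y).exists_cmIdeal_not_mem hxy
  exact ⟨M, hM, hyM le_rfl, hxM⟩

/-- The image of `x` in `Δ(J(P))`. -/
def cmIdealsNotMem (x : P) : Set {I : Set P // CMIdeal I} :=
  {I | x ∉ I.1}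

lemma cmIdealsNotMem_sup (a b : P) :
    cmIdealsNotMem (a ⊔ b) = cmIdealsNotMem a ∪ cmIdealsNotMem b := by
  ext I
  simp only [cmIdealsNotMem, mem_ofPred_eq, mem_union, I.2.1.sup_mem_iff, not_and_or]

lemma cmIdealsNotMem_injective : Function.Injective (cmIdealsNotMem (P := P)) := by
  have le_of_eq {a b : P} (hab : cmIdealsNotMem a = cmIdealsNotMem b) : a ≤ b := by
    by_contra hba
    obtain ⟨M, hM, hbM, haM⟩ := not_le_iff_exists_cmIdeal.1 hba
    have : (⟨M, hM⟩ : {I : Set P // CMIdeal I}) ∈ cmIdealsNotMem b := hab ▸ haM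
    exact this hbM
  exact fun a b hab => le_antisymm (le_of_eq hab) (le_of_eq hab.symm)

lemma cmIdealsNotMem_mem_finGenInit {x : P} {𝓖 : Finset (Set P)} (h𝓖 : ∀ G ∈ 𝓖, IsIdeal G)
    (hcover : {y : P | ¬ x ≤ y} = ⋃₀ ↑𝓖) : cmIdealsNotMem x ∈ FinGenInit {I // CMIdeal I} := by
  classical
  have hx_not_mem {G} (hG : G ∈ 𝓖) : x ∉ G := fun hxG =>
    (show x ∈ {y : P | ¬ x ≤ y} from hcover ▸ ⟨G, hG, hxG⟩) le_rfl
  choose m hm using fun G (hG : G ∈ 𝓖) => (h𝓖 G hG).exists_cmIdeal_not_mem (hx_not_mem hG)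
  refine ⟨𝓖.attach.image fun G => ⟨m G.1 G.2, (hm G.1 G.2).1⟩, ext fun I => ⟨fun hxI => ?_, ?_⟩⟩
  · have hI_cover : I.1 ⊆ ⋃₀ ↑𝓖 :=
      hcover ▸ fun y hy hxy => hxI (I.2.1.2.2 x y hxy hy)
    obtain ⟨G, hG, hIG⟩ :=
      I.2.1.exists_subset_of_subset_sUnion (fun G hG => (h𝓖 G hG).isLowerSet) hI_cover
    exact ⟨_, Finset.mem_image_of_mem _ (Finset.mem_attach _ ⟨G, hG⟩),
      hIG.trans (hm G hG).2.1⟩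
  · rintro ⟨J, hJ, hIJ⟩ hxI
    obtain ⟨⟨G, hG⟩, -, rfl⟩ := Finset.mem_image.1 hJ
    exact (hm G hG).2.2 (hIJ hxI)

end SemilatticeSup

/-- If every set `{y : x ≰ y}` is a finite union of ideals and `Δ(J(P))` is
well-founded, then `P` embeds as a join-subsemilattice into `I_{<ω}(Q)` for some well-founded
poset `Q`. -/
theorem embeds_wellFounded_finGenInit {P : Type u} [SemilatticeSup P]
    (h1 : ∀ x : P, ∃ 𝓖 : Finset (Set P), (∀ I ∈ 𝓖, IsIdeal I) ∧
      {y : P | ¬ x ≤ y} = ⋃₀ ↑𝓖)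
    (h2 : WellFounded (fun I J : {I : Set P // CMIdeal I} => I < J)) :
    ∃ (Q : Type u) (_ : PartialOrder Q), WellFounded ((· < ·) : Q → Q → Prop) ∧
      ∃ f : P → Set Q, (∀ p, f p ∈ FinGenInit Q) ∧ Function.Injective f ∧
        ∀ a b, f (a ⊔ b) = f a ∪ f b := by
  refine ⟨{I : Set P // CMIdeal I}, inferInstance, h2, cmIdealsNotMem, fun x => ?_,
    cmIdealsNotMem_injective, cmIdealsNotMem_sup⟩
  obtain ⟨𝓖, h𝓖, hcover⟩ := h1 x
  exact cmIdealsNotMem_mem_finGenInit h𝓖 hcover
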